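/- Let d ≥ 2, n ∈ ℕ, and let H = (2^{2n}(d+1)/(d^{2n}(n!)²)) · [ ((d−1)/(d+1))·P_sym^{⊗n} ⊗ (P_sym^Γ)^{⊗n} + P_sym^{⊗n} ⊗ (P_asym^Γ)^{⊗n} + P_asym^{⊗n} ⊗ (P_sym^Γ)^{⊗n} − P_asym^{⊗n} ⊗ (P_asym^Γ)^{⊗n} ] ∈ (M_d(ℂ) ⊗ M_d(ℂ))^{⊗2n}. Then H is positive semidefinite and its partial transpose with respect to the bipartition of all A-systems versus all B-systems is positive semidefinite. -/

import Mathlib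

open scoped ComplexOrder Kronecker Matrix

namespace TensorDecomp

/-- The Choi matrix of a linear map between matrix algebras. -/
noncomputable def choi {A B : Type} [Fintype A] [DecidableEq A]
    (L : Matrix A A ℂ →ₗ[ℂ] Matrix B B ℂ) : Matrix (A × B) (A × B) ℂ :=
  fun p q => L (Matrix.single p.1 q.1 1) p.2 q.2

/-- A map is positive if it maps positive semidefinite matrices to positive
semidefinite matrices. -/
def IsPositiveMap {A B : Type} [Fintype A] [Fintype B]
    (L : Matrix A A ℂ →ₗ[ℂ] Matrix B B ℂ) : Prop :=
  ∀ X : Matrix A A ℂ, X.PosSemidef → (L X).PosSemidef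

/-- A map is completely positive iff its Choi matrix is positive semidefinite. -/
def IsCompletelyPositive {A B : Type} [Fintype A] [DecidableEq A] [Fintype B]
    (L : Matrix A A ℂ →ₗ[ℂ] Matrix B B ℂ) : Prop :=
  (choi L).PosSemidef

/-- Matrix transposition as a linear map. -/
def transposeMap (A : Type) : Matrix A A ℂ →ₗ[ℂ] Matrix A A ℂ where
  toFun X := X.transpose
  map_add' X Y := Matrix.transpose_add X Y
  map_smul' c X := Matrix.transpose_smul c X

/-- A map is completely copositive iff transposition composed with it is
completely positive. -/
def IsCompletelyCopositive {A B : Type} [Fintype A] [DecidableEq A] [Fintype B]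
    (L : Matrix A A ℂ →ₗ[ℂ] Matrix B B ℂ) : Prop :=
  IsCompletelyPositive (transposeMap B ∘ₗ L)

/-- A map is decomposable iff it is the sum of a completely positive map and the
transposition composed with a completely positive map. -/
def IsDecomposable {A B : Type} [Fintype A] [DecidableEq A] [Fintype B]
    (L : Matrix A A ℂ →ₗ[ℂ] Matrix B B ℂ) : Prop :=
  ∃ T₁ T₂ : Matrix A A ℂ →ₗ[ℂ] Matrix B B ℂ,
    IsCompletelyPositive T₁ ∧ IsCompletelyPositive T₂ ∧ L = T₁ + transposeMap B ∘ₗ T₂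

/-- The tensor product of a finite family of linear maps between matrix algebras,
characterized by `(⊗ₜ L t) (⊗ₜ X t) = ⊗ₜ (L t (X t))`. -/
noncomputable def mapTensorFamily {ι : Type} [Fintype ι] [DecidableEq ι]
    {κ κ' : Type} [Fintype κ] [DecidableEq κ]
    (L : ι → (Matrix κ κ ℂ →ₗ[ℂ] Matrix κ' κ' ℂ)) :
    Matrix (ι → κ) (ι → κ) ℂ →ₗ[ℂ] Matrix (ι → κ') (ι → κ') ℂ where
  toFun X := fun k l => ∑ i : ι → κ, ∑ j : ι → κ,
    X i j * ∏ t, L t (Matrix.single (i t) (j t) 1) (k t) (l t)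
  map_add' X Y := by
    funext k l
    change _ = (_ : ℂ) + _
    simp [Matrix.add_apply, add_mul, Finset.sum_add_distrib]
  map_smul' c X := by
    funext k l
    change _ = c * _
    simp [Matrix.smul_apply, smul_eq_mul, Finset.mul_sum, mul_assoc]

/-- The `n`-th tensor power of a linear map between matrix algebras. -/
noncomputable def mapTensorPow {κ κ' : Type} [Fintype κ] [DecidableEq κ]
    (L : Matrix κ κ ℂ →ₗ[ℂ] Matrix κ' κ' ℂ) (n : ℕ) :
    Matrix (Fin n → κ) (Fin n → κ) ℂ →ₗ[ℂ] Matrix (Fin n → κ') (Fin n → κ') ℂ :=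
  mapTensorFamily (fun _ : Fin n => L)

/-- The tensor product of two linear maps between matrix algebras, characterized by
`(L₁ ⊗ L₂)(X ⊗ Y) = L₁(X) ⊗ L₂(Y)`. -/
noncomputable def mapTensor {A B C D : Type} [Fintype A] [DecidableEq A]
    [Fintype C] [DecidableEq C]
    (L₁ : Matrix A A ℂ →ₗ[ℂ] Matrix B B ℂ) (L₂ : Matrix C C ℂ →ₗ[ℂ] Matrix D D ℂ) :
    Matrix (A × C) (A × C) ℂ →ₗ[ℂ] Matrix (B × D) (B × D) ℂ where
  toFun X := fun k l => ∑ i : A × C, ∑ j : A × C,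
    X i j * (L₁ (Matrix.single i.1 j.1 1) k.1 l.1 *
      L₂ (Matrix.single i.2 j.2 1) k.2 l.2)
  map_add' X Y := by
    funext k l
    change _ = (_ : ℂ) + _
    simp [Matrix.add_apply, add_mul, Finset.sum_add_distrib]
  map_smul' c X := by
    funext k l
    change _ = c * _
    simp [Matrix.smul_apply, smul_eq_mul, Finset.mul_sum, mul_assoc]

/-- The adjoint of a linear map between matrix algebras with respect to the
Hilbert-Schmidt inner product `⟨A, B⟩ = Tr[Aᴴ B]`. -/
noncomputable def hsAdjoint {A B : Type} [Fintype A] [DecidableEq A] [Fintype B]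
    (T : Matrix A A ℂ →ₗ[ℂ] Matrix B B ℂ) : Matrix B B ℂ →ₗ[ℂ] Matrix A A ℂ where
  toFun Y := fun i j => ((T (Matrix.single i j 1))ᴴ * Y).trace
  map_add' X Y := by
    funext i j
    change _ = (_ : ℂ) + _
    simp [Matrix.mul_add, Matrix.add_apply]
  map_smul' c X := by
    funext i j
    change _ = c * _
    simp [Matrix.mul_smul, Matrix.smul_apply]

/-- The quantity `μ(P)` from Definition 2 of the paper. -/
noncomputable def mu {A B : Type} [Fintype A] [DecidableEq A] [Fintype B] [DecidableEq B]
    (P : Matrix A A ℂ →ₗ[ℂ] Matrix B B ℂ) : ℝ :=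
  sInf { r : ℝ | ∃ T : Matrix A A ℂ →ₗ[ℂ] Matrix B B ℂ,
    IsCompletelyPositive T ∧ hsAdjoint T (P 1) ≠ 0 ∧
    r = ((choi P * choi T).trace).re / ((hsAdjoint T (P 1)).trace).re }

/-- The unique linear map with the given Choi matrix. -/
noncomputable def ofChoi {A B : Type} [Fintype A] [Fintype B]
    (C : Matrix (A × B) (A × B) ℂ) : Matrix A A ℂ →ₗ[ℂ] Matrix B B ℂ where
  toFun X := fun k l => ∑ i : A, ∑ j : A, X i j * C (i, k) (j, l)
  map_add' X Y := by
    funext k l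
    change _ = (_ : ℂ) + _
    simp [Matrix.add_apply, add_mul, Finset.sum_add_distrib]
  map_smul' c X := by
    funext k l
    change _ = c * _
    simp [Matrix.smul_apply, smul_eq_mul, Finset.mul_sum, mul_assoc]

/-- The flip operator on `ℂ^d ⊗ ℂ^d`. -/
def flipOp (d : ℕ) : Matrix (Fin d × Fin d) (Fin d × Fin d) ℂ :=
  fun p q => if p.1 = q.2 ∧ p.2 = q.1 then 1 else 0

/-- The projection onto the symmetric subspace of `ℂ^d ⊗ ℂ^d`. -/
noncomputable def Psym (d : ℕ) : Matrix (Fin d × Fin d) (Fin d × Fin d) ℂ :=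
  (1 / 2 : ℂ) • (1 + flipOp d)

/-- The projection onto the antisymmetric subspace of `ℂ^d ⊗ ℂ^d`. -/
noncomputable def Pasym (d : ℕ) : Matrix (Fin d × Fin d) (Fin d × Fin d) ℂ :=
  (1 / 2 : ℂ) • (1 - flipOp d)

/-- The (unnormalized to trace one) Werner state with parameter `p`. -/
noncomputable def wernerState (d : ℕ) (p : ℝ) :
    Matrix (Fin d × Fin d) (Fin d × Fin d) ℂ :=
  ((p : ℂ) / ((d : ℂ) * ((d : ℂ) + 1) / 2)) • Psym d +
    (((1 - p : ℝ) : ℂ) / ((d : ℂ) * ((d : ℂ) - 1) / 2)) • Pasym d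

/-- The Werner map `W_p`, i.e. the unique linear map whose Choi matrix is the
Werner state `ρ_W(p)`. -/
noncomputable def wernerMap (d : ℕ) (p : ℝ) :
    Matrix (Fin d) (Fin d) ℂ →ₗ[ℂ] Matrix (Fin d) (Fin d) ℂ :=
  ofChoi (wernerState d p)

/-- Partial transposition (on the second tensor factor) of a bipartite matrix. -/
def ptranspose {A B : Type} (X : Matrix (A × B) (A × B) ℂ) :
    Matrix (A × B) (A × B) ℂ :=
  fun p q => X (p.1, q.2) (q.1, p.2)

/-- Partial transposition of all `B`-systems of a multipartite matrix whose
subsystems each consist of an `A`-part (first factor) and a `B`-part (second factor). -/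
def ptransposeAll {ι A B : Type} (X : Matrix (ι → A × B) (ι → A × B) ℂ) :
    Matrix (ι → A × B) (ι → A × B) ℂ :=
  fun p q => X (fun t => ((p t).1, (q t).2)) (fun t => ((q t).1, (p t).2))

/-- The tensor product of a finite family of matrices. -/
def tensorFamily {ι : Type} [Fintype ι] {κ : Type} (M : ι → Matrix κ κ ℂ) :
    Matrix (ι → κ) (ι → κ) ℂ :=
  fun p q => ∏ t, M t (p t) (q t)

/-- The normalized projections `P₀ = P_sym / d_sym` and `P₁ = P_asym / d_asym`. -/
noncomputable def Pnorm (d : ℕ) : Fin 2 → Matrix (Fin d × Fin d) (Fin d × Fin d) ℂ :=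
  ![((d : ℂ) * ((d : ℂ) + 1) / 2)⁻¹ • Psym d, ((d : ℂ) * ((d : ℂ) - 1) / 2)⁻¹ • Pasym d]

/-- The matrices `F(k,l)` from equation (10) of the paper (with `k, l` 0-based). -/
noncomputable def Fmat (d n m : ℕ) (k : Fin (n + 1)) (l : Fin (m + 1)) :
    Matrix ((Fin n ⊕ Fin m) → Fin d × Fin d) ((Fin n ⊕ Fin m) → Fin d × Fin d) ℂ :=
  ((Nat.factorial n * Nat.factorial m : ℂ))⁻¹ • ∑ f : (Fin n ⊕ Fin m) → Fin 2,
    if (∑ t : Fin n, ((f (Sum.inl t)) : ℕ)) = (k : ℕ) ∧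
        (∑ s : Fin m, ((f (Sum.inr s)) : ℕ)) = (l : ℕ) then
      tensorFamily (fun t => match t with
        | Sum.inl _ => Pnorm d (f t)
        | Sum.inr _ => ptranspose (Pnorm d (f t)))
    else 0

/-- The matrix `H_Q` from equation (9) of the paper (with indices 0-based). -/
noncomputable def HQ (d n m : ℕ) (Q : Matrix (Fin (n + 1)) (Fin (m + 1)) ℝ) :
    Matrix ((Fin n ⊕ Fin m) → Fin d × Fin d) ((Fin n ⊕ Fin m) → Fin d × Fin d) ℂ :=
  ∑ k : Fin (n + 1), ∑ l : Fin (m + 1), (Q k l : ℂ) • Fmat d n m k l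

/-- The matrix `V^m_d` from equation (8) of the paper (with indices 0-based). -/
noncomputable def Vmat (m d : ℕ) : Matrix (Fin (m + 1)) (Fin (m + 1)) ℝ :=
  fun a b => (-1 : ℝ) ^ (a : ℕ) *
    ∑ t ∈ Finset.Icc ((a : ℕ) + (b : ℕ) - m) (min (a : ℕ) (b : ℕ)),
      ((a : ℕ).choose t : ℝ) * ((m - (a : ℕ)).choose ((b : ℕ) - t) : ℝ) *
        (-(((d : ℝ) + 1) / ((d : ℝ) - 1))) ^ t

/-- The vector `v^n_p` from equation (12) of the paper (with index 0-based). -/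
noncomputable def vvec (d n : ℕ) (p : ℝ) : Fin (n + 1) → ℝ :=
  fun k => (((d : ℝ) + 1) / ((d : ℝ) - 1)) ^ (k : ℕ) * (1 - p) ^ (k : ℕ) * p ^ (n - (k : ℕ))

/-- The mixed tensor power `W_{p₁}^{⊗n} ⊗ (ϑ ∘ W_{p₂})^{⊗m}` of Werner maps. -/
noncomputable def wernerMixed (d n m : ℕ) (p₁ p₂ : ℝ) :
    Matrix ((Fin n ⊕ Fin m) → Fin d) ((Fin n ⊕ Fin m) → Fin d) ℂ →ₗ[ℂ]
      Matrix ((Fin n ⊕ Fin m) → Fin d) ((Fin n ⊕ Fin m) → Fin d) ℂ :=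
  mapTensorFamily (fun t => match t with
    | Sum.inl _ => wernerMap d p₁
    | Sum.inr _ => transposeMap (Fin d) ∘ₗ wernerMap d p₂)

noncomputable def H13 (d n : ℕ) :
    Matrix ((Fin n ⊕ Fin n) → Fin d × Fin d) ((Fin n ⊕ Fin n) → Fin d × Fin d) ℂ :=
  ((2 ^ (2 * n) * ((d : ℂ) + 1)) / ((d : ℂ) ^ (2 * n) * (Nat.factorial n : ℂ) ^ 2)) •
    ((((d : ℂ) - 1) / ((d : ℂ) + 1)) • tensorFamily (fun t => match t with
        | Sum.inl _ => Psym d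
        | Sum.inr _ => ptranspose (Psym d))
      + tensorFamily (fun t => match t with
        | Sum.inl _ => Psym d
        | Sum.inr _ => ptranspose (Pasym d))
      + tensorFamily (fun t => match t with
        | Sum.inl _ => Pasym d
        | Sum.inr _ => ptranspose (Psym d))
      - tensorFamily (fun t => match t with
        | Sum.inl _ => Pasym d
        | Sum.inr _ => ptranspose (Pasym d)))

section AuxProof

set_option linter.unusedSectionVars false

/-! ### Auxiliary lemmas for `stmt13` -/

section TF

variable {ι κ : Type} [Fintype ι] [DecidableEq ι] [Fintype κ] [DecidableEq κ]

omit [DecidableEq ι] [Fintype κ] [DecidableEq κ] in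
lemma tensorFamily_conjTranspose (M : ι → Matrix κ κ ℂ) :
    (tensorFamily M)ᴴ = tensorFamily (fun t => (M t)ᴴ) := by
  funext p q
  simp [tensorFamily, Matrix.conjTranspose_apply, map_prod]

lemma tensorFamily_mul (A B : ι → Matrix κ κ ℂ) :
    tensorFamily (fun t => A t * B t) = tensorFamily A * tensorFamily B := by
  funext p q
  simp only [tensorFamily, Matrix.mul_apply]
  rw [Finset.prod_univ_sum, Fintype.piFinset_univ]
  exact Finset.sum_congr rfl fun r _ => Finset.prod_mul_distrib

lemma tensorFamily_posSemidef {M : ι → Matrix κ κ ℂ} (h : ∀ t, (M t).PosSemidef) :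
    (tensorFamily M).PosSemidef := by
  choose B hB using fun t => (by
    open scoped MatrixOrder Matrix.Norms.L2Operator in
    exact CStarAlgebra.nonneg_iff_eq_star_mul_self.mp (Matrix.nonneg_iff_posSemidef.mpr (h t)) :
      ∃ B : Matrix κ κ ℂ, M t = star B * B)
  have hM : tensorFamily M = (tensorFamily B)ᴴ * tensorFamily B := by
    rw [tensorFamily_conjTranspose, ← tensorFamily_mul]
    exact congrArg _ (funext hB)
  rw [hM]
  exact Matrix.posSemidef_conjTranspose_mul_self _

omit [Fintype κ] [DecidableEq κ] in
lemma tensorFamily_sum_smul (c : ι → Fin 2 → ℂ) (M : ι → Fin 2 → Matrix κ κ ℂ) :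
    tensorFamily (fun t => ∑ j, c t j • M t j)
      = ∑ g : ι → Fin 2, (∏ t, c t (g t)) • tensorFamily (fun t => M t (g t)) := by
  funext p q
  simp only [tensorFamily, Matrix.sum_apply, Matrix.smul_apply, smul_eq_mul]
  rw [Finset.prod_univ_sum, Fintype.piFinset_univ]
  exact Finset.sum_congr rfl fun g _ => Finset.prod_mul_distrib

end TF

lemma posSemidef_of_idem {A : Type} [Fintype A] {M : Matrix A A ℂ}
    (h1 : Mᴴ = M) (h2 : M * M = M) : M.PosSemidef := by
  have : M = Mᴴ * M := by rw [h1, h2]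
  rw [this]
  exact Matrix.posSemidef_conjTranspose_mul_self M

lemma posSemidef_real_smul {A : Type} [Fintype A] {M : Matrix A A ℂ} (hM : M.PosSemidef)
    {r : ℝ} (hr : 0 ≤ r) : ((r : ℂ) • M).PosSemidef := by
  rw [Matrix.posSemidef_iff_dotProduct_mulVec] at hM ⊢
  constructor
  · have h : ((r : ℂ) • M)ᴴ = star (r : ℂ) • Mᴴ := Matrix.conjTranspose_smul _ _
    rw [Matrix.IsHermitian, h, hM.1]
    simp [Complex.conj_ofReal]
  · intro x
    rw [Matrix.smul_mulVec, dotProduct_smul, smul_eq_mul]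
    exact mul_nonneg (by exact_mod_cast hr) (hM.2 x)

lemma posSemidef_sum {A ι' : Type} [Fintype A] (s : Finset ι') (f : ι' → Matrix A A ℂ)
    (h : ∀ i ∈ s, (f i).PosSemidef) : (∑ i ∈ s, f i).PosSemidef := by
  classical
  induction s using Finset.induction_on with
  | empty => simpa using Matrix.PosSemidef.zero
  | @insert t s0 hts ih =>
    rw [Finset.sum_insert hts]
    exact (h t (Finset.mem_insert_self t s0)).add
      (ih fun u hu => h u (Finset.mem_insert_of_mem hu))

lemma fin2_cases (i : Fin 2) : i = 0 ∨ i = 1 := by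
  rcases i with ⟨iv, hi⟩
  interval_cases iv
  · exact Or.inl rfl
  · exact Or.inr rfl

/-- the per-site family on the non-transposed side -/
noncomputable def PmatF (d : ℕ) : Fin 2 → Matrix (Fin d × Fin d) (Fin d × Fin d) ℂ :=
  fun i => if i = 0 then Psym d else Pasym d

/-- partial transpose of the flip -/
def Gm (d : ℕ) : Matrix (Fin d × Fin d) (Fin d × Fin d) ℂ :=
  fun p q => if p.1 = p.2 ∧ q.1 = q.2 then 1 else 0

/-- the per-site projections on the transposed side -/
noncomputable def QmatF (d : ℕ) : Fin 2 → Matrix (Fin d × Fin d) (Fin d × Fin d) ℂ :=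
  fun i => if i = 0 then 1 - ((d : ℂ))⁻¹ • Gm d else ((d : ℂ))⁻¹ • Gm d

/-- the eigenvalue coefficients -/
noncomputable def gam (d : ℕ) : Fin 2 → ℝ :=
  fun i => if i = 0 then ((d : ℝ) + 1) / 2 else (1 - (d : ℝ)) / 2

noncomputable def cCR (d : ℕ) (i : Fin 2) (j : Fin 2) : ℝ :=
  if j = 0 then 1 / 2 else gam d i

noncomputable def muR (d : ℕ) : Fin 2 → Fin 2 → ℝ := fun i j =>
  if j = 0 then (if i = 0 then ((d : ℝ) - 1) / ((d : ℝ) + 1) else 1)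
  else (if i = 0 then 1 else -1)

variable {d : ℕ}

lemma flip_conjTranspose : (flipOp d)ᴴ = flipOp d := by
  funext p q
  simp only [Matrix.conjTranspose_apply, flipOp]
  by_cases h : p.1 = q.2 ∧ p.2 = q.1
  · rw [if_pos ⟨h.2.symm, h.1.symm⟩, if_pos h, star_one]
  · rw [if_neg (fun ⟨a, b⟩ => h ⟨b.symm, a.symm⟩), if_neg h, star_zero]

lemma flip_mul_flip : flipOp d * flipOp d = 1 := by
  funext p q
  simp only [Matrix.mul_apply, flipOp, Matrix.one_apply, ite_mul, one_mul, zero_mul]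
  rw [Finset.sum_eq_single (p.2, p.1)]
  · by_cases h : p = q
    · subst h; simp
    · have : ¬((p.2 : Fin d) = q.2 ∧ (p.1 : Fin d) = q.1) := by
        intro ⟨h1, h2⟩; exact h (Prod.ext h2 h1)
      simp [h, this]
  · intro r _ hr
    have : ¬(p.1 = r.2 ∧ p.2 = r.1) := by
      rintro ⟨h1, h2⟩; exact hr (Prod.ext h2.symm h1.symm)
    simp [this]
  · simp

lemma Gm_conjTranspose : (Gm d)ᴴ = Gm d := by
  funext p q
  simp only [Matrix.conjTranspose_apply, Gm]
  by_cases h : p.1 = p.2 ∧ q.1 = q.2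
  · rw [if_pos ⟨h.2, h.1⟩, if_pos h, star_one]
  · rw [if_neg (fun ⟨a, b⟩ => h ⟨b, a⟩), if_neg h, star_zero]

lemma Gm_mul_Gm : Gm d * Gm d = (d : ℂ) • Gm d := by
  funext p q
  simp only [Matrix.mul_apply, Gm, Matrix.smul_apply, ite_mul, one_mul, zero_mul,
    smul_eq_mul]
  by_cases hp : p.1 = p.2
  · by_cases hq : q.1 = q.2
    · have hcount : (∑ r : Fin d × Fin d, if r.1 = r.2 then (1 : ℂ) else 0) = d := by
        rw [Fintype.sum_prod_type]
        simp [Finset.sum_ite_eq]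
      simp only [hp, hq, true_and, and_true, if_true]
      rw [← hcount, mul_one]
      exact Finset.sum_congr rfl fun r _ => by by_cases h : r.1 = r.2 <;> simp [h]
    · simp [hp, hq]
  · simp [hp]

lemma ptranspose_flip : ptranspose (flipOp d) = Gm d := by
  funext p q
  simp only [ptranspose, flipOp, Gm]
  exact if_congr ⟨fun ⟨h1, h2⟩ => ⟨h1, h2.symm⟩, fun ⟨h1, h2⟩ => ⟨h1, h2.symm⟩⟩ rfl rfl

lemma ptranspose_one {A B : Type} [DecidableEq A] [DecidableEq B] :
    ptranspose (1 : Matrix (A × B) (A × B) ℂ) = 1 := by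
  funext p q
  simp only [ptranspose, Matrix.one_apply]
  refine if_congr ?_ rfl rfl
  constructor
  · intro h
    have h' := Prod.ext_iff.mp h
    exact Prod.ext h'.1 h'.2.symm
  · intro h
    subst h
    rfl

lemma Psym_posSemidef : (Psym d).PosSemidef := by
  have h1 : (Psym d)ᴴ = Psym d := by
    rw [Psym, Matrix.conjTranspose_smul, Matrix.conjTranspose_add,
      Matrix.conjTranspose_one, flip_conjTranspose]
    norm_num
  have h2 : Psym d * Psym d = Psym d := by
    have hsq : (1 + flipOp d) * (1 + flipOp d)
        = (2 : ℂ) • (1 + flipOp d) := by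
      simp only [add_mul, mul_add, one_mul, mul_one, flip_mul_flip, two_smul, smul_add]
      abel
    rw [Psym, Matrix.smul_mul, Matrix.mul_smul, smul_smul, hsq, smul_smul]
    norm_num
  exact posSemidef_of_idem h1 h2

lemma Pasym_posSemidef : (Pasym d).PosSemidef := by
  have h1 : (Pasym d)ᴴ = Pasym d := by
    rw [Pasym, Matrix.conjTranspose_smul, Matrix.conjTranspose_sub,
      Matrix.conjTranspose_one, flip_conjTranspose]
    norm_num
  have h2 : Pasym d * Pasym d = Pasym d := by
    have hsq : (1 - flipOp d) * (1 - flipOp d)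
        = (2 : ℂ) • (1 - flipOp d) := by
      simp only [sub_mul, mul_sub, one_mul, mul_one, flip_mul_flip, two_smul, smul_sub]
      abel
    rw [Pasym, Matrix.smul_mul, Matrix.mul_smul, smul_smul, hsq, smul_smul]
    norm_num
  exact posSemidef_of_idem h1 h2

lemma PmatF_posSemidef (i : Fin 2) : (PmatF d i).PosSemidef := by
  rw [PmatF]
  split
  · exact Psym_posSemidef
  · exact Pasym_posSemidef

lemma Q1_mul_Q1 (hd : 2 ≤ d) :
    ((d : ℂ))⁻¹ • Gm d * ((d : ℂ))⁻¹ • Gm d = ((d : ℂ))⁻¹ • Gm d := by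
  have hdne : (d : ℂ) ≠ 0 := by
    simp only [ne_eq, Nat.cast_eq_zero]
    omega
  rw [Matrix.smul_mul, Matrix.mul_smul, Gm_mul_Gm, smul_smul, smul_smul]
  congr 1
  field_simp

lemma QmatF_posSemidef (hd : 2 ≤ d) (i : Fin 2) : (QmatF d i).PosSemidef := by
  have hq1h : (((d : ℂ))⁻¹ • Gm d)ᴴ = ((d : ℂ))⁻¹ • Gm d := by
    rw [Matrix.conjTranspose_smul, Gm_conjTranspose]
    congr 1
    simp
  rw [QmatF]
  split
  · refine posSemidef_of_idem ?_ ?_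
    · rw [Matrix.conjTranspose_sub, Matrix.conjTranspose_one, hq1h]
    · simp only [sub_mul, mul_sub, one_mul, mul_one, Q1_mul_Q1 hd]
      abel
  · exact posSemidef_of_idem hq1h (Q1_mul_Q1 hd)

/-- the key per-site decomposition -/
lemma ptranspose_PmatF (hd : 2 ≤ d) (i : Fin 2) :
    ptranspose (PmatF d i) = ∑ j : Fin 2, ((cCR d i j : ℝ) : ℂ) • QmatF d j := by
  have hdne : (d : ℂ) ≠ 0 := by
    simp only [ne_eq, Nat.cast_eq_zero]
    omega
  have hpt : ∀ X Y : Matrix (Fin d × Fin d) (Fin d × Fin d) ℂ, ∀ c : ℂ,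
      ptranspose (c • (X + Y)) = c • (ptranspose X + ptranspose Y) := fun _ _ _ => rfl
  have hpt' : ∀ X Y : Matrix (Fin d × Fin d) (Fin d × Fin d) ℂ, ∀ c : ℂ,
      ptranspose (c • (X - Y)) = c • (ptranspose X - ptranspose Y) := fun _ _ _ => rfl
  rw [Fin.sum_univ_two]
  rcases fin2_cases i with rfl | rfl
  · rw [show PmatF d 0 = Psym d from rfl, Psym, hpt, ptranspose_one, ptranspose_flip]
    rw [show cCR d 0 0 = 1 / 2 from rfl, show cCR d 0 1 = ((d : ℝ) + 1) / 2 from rfl]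
    rw [show QmatF d 0 = 1 - ((d : ℂ))⁻¹ • Gm d from rfl,
      show QmatF d 1 = ((d : ℂ))⁻¹ • Gm d from rfl]
    push_cast
    rw [smul_sub, smul_add]
    rw [show ((((d : ℂ) + 1) / 2)) • (((d : ℂ))⁻¹ • Gm d)
        = ((((d : ℂ) + 1) / 2) * ((d : ℂ))⁻¹) • Gm d from smul_smul _ _ _,
      show ((1 / 2 : ℂ)) • (((d : ℂ))⁻¹ • Gm d)
        = ((1 / 2 : ℂ) * ((d : ℂ))⁻¹) • Gm d from smul_smul _ _ _]
    have hc : (((d : ℂ) + 1) / 2) * ((d : ℂ))⁻¹ - (1 / 2 : ℂ) * ((d : ℂ))⁻¹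
        = 1 / 2 := by
      field_simp
      ring
    rw [sub_add_eq_add_sub, add_sub_assoc, ← sub_smul, hc]
  · rw [show PmatF d 1 = Pasym d from rfl, Pasym, hpt', ptranspose_one, ptranspose_flip]
    rw [show cCR d 1 0 = 1 / 2 from rfl, show cCR d 1 1 = (1 - (d : ℝ)) / 2 from rfl]
    rw [show QmatF d 0 = 1 - ((d : ℂ))⁻¹ • Gm d from rfl,
      show QmatF d 1 = ((d : ℂ))⁻¹ • Gm d from rfl]
    push_cast
    rw [smul_sub, smul_sub]
    rw [show (((1 - (d : ℂ)) / 2)) • (((d : ℂ))⁻¹ • Gm d)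
        = (((1 - (d : ℂ)) / 2) * ((d : ℂ))⁻¹) • Gm d from smul_smul _ _ _,
      show ((1 / 2 : ℂ)) • (((d : ℂ))⁻¹ • Gm d)
        = ((1 / 2 : ℂ) * ((d : ℂ))⁻¹) • Gm d from smul_smul _ _ _]
    have hc : (1 / 2 : ℂ) * ((d : ℂ))⁻¹ - ((1 - (d : ℂ)) / 2) * ((d : ℂ))⁻¹
        = 1 / 2 := by
      field_simp
      ring
    rw [sub_add, ← sub_smul, hc]

/-- product pair inequality -/
lemma prod_pair {ι' : Type} (a : ℝ) (ha0 : 0 ≤ a) (ha1 : a ≤ 1)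
    (s : Finset ι') (x y : ι' → ℝ)
    (h : ∀ t ∈ s, (0 ≤ x t ∧ y t = x t) ∨ (|y t| = a * x t ∧ 0 ≤ x t)) :
    0 ≤ ∏ t ∈ s, x t ∧
      ((∏ t ∈ s, y t) = ∏ t ∈ s, x t ∨ |∏ t ∈ s, y t| ≤ a * ∏ t ∈ s, x t) := by
  classical
  induction s using Finset.induction_on with
  | empty => simp
  | @insert t s0 hts ih =>
    obtain ⟨hx, hdisj⟩ := ih (fun u hu => h u (Finset.mem_insert_of_mem hu))
    have hmem := h t (Finset.mem_insert_self t s0)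
    rw [Finset.prod_insert hts, Finset.prod_insert hts]
    rcases hmem with ⟨hxt, hyt⟩ | ⟨hyt, hxt⟩
    · refine ⟨mul_nonneg hxt hx, ?_⟩
      rcases hdisj with heq | hle
      · exact Or.inl (by rw [hyt, heq])
      · right
        rw [hyt, abs_mul, abs_of_nonneg hxt]
        nlinarith [abs_nonneg (∏ u ∈ s0, y u)]
    · refine ⟨mul_nonneg hxt hx, ?_⟩
      right
      rw [abs_mul, hyt]
      rcases hdisj with heq | hle
      · rw [heq, abs_of_nonneg hx]
        nlinarith
      · calc a * x t * |∏ u ∈ s0, y u| ≤ a * x t * (a * ∏ u ∈ s0, x u) :=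
            mul_le_mul_of_nonneg_left hle (mul_nonneg ha0 hxt)
          _ ≤ a * (x t * ∏ u ∈ s0, x u) := by
            nlinarith [mul_nonneg (mul_nonneg ha0 (mul_nonneg hxt hx))
              (sub_nonneg.mpr ha1)]

/-- The main positivity lemma: for any marking `b` of the sites, the
`μ`-combination of tensor products is positive semidefinite. -/
lemma main_psd (d : ℕ) (hd : 2 ≤ d) {ι : Type} [Fintype ι] [DecidableEq ι]
    (b : ι → Bool) :
    (∑ i : Fin 2, ∑ j : Fin 2, ((muR d i j : ℝ) : ℂ) •
      tensorFamily (fun t => if b t then ptranspose (PmatF d i) else PmatF d j)).PosSemidef := by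
  have hdR : (2 : ℝ) ≤ (d : ℝ) := by exact_mod_cast hd
  set aR : ℝ := ((d : ℝ) - 1) / ((d : ℝ) + 1) with haR
  have ha0 : 0 ≤ aR := div_nonneg (by linarith) (by linarith)
  have ha1 : aR ≤ 1 := by
    rw [haR, div_le_one (by linarith)]
    linarith
  set cR : Fin 2 → Fin 2 → ι → Fin 2 → ℝ := fun i j t j' =>
    if b t then cCR d i j' else (if j' = j then 1 else 0) with hcR
  set Mf : ι → Fin 2 → Matrix (Fin d × Fin d) (Fin d × Fin d) ℂ := fun t j' =>
    if b t then QmatF d j' else PmatF d j' with hMf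
  have hsite : ∀ i j : Fin 2,
      (fun t => if b t then ptranspose (PmatF d i) else PmatF d j)
        = fun t => ∑ j' : Fin 2, ((cR i j t j' : ℝ) : ℂ) • Mf t j' := by
    intro i j
    funext t
    by_cases hb : b t = true
    · simp only [hcR, hMf, hb, if_true]
      exact ptranspose_PmatF hd i
    · simp only [hcR, hMf, hb, if_false, Bool.false_eq_true]
      rw [Fin.sum_univ_two]
      rcases fin2_cases j with rfl | rfl <;> simp
  have hrw : (∑ i : Fin 2, ∑ j : Fin 2, ((muR d i j : ℝ) : ℂ) •
      tensorFamily (fun t => if b t then ptranspose (PmatF d i) else PmatF d j))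
      = ∑ g : ι → Fin 2, (∑ i : Fin 2, ∑ j : Fin 2,
          ((muR d i j : ℝ) : ℂ) * ∏ t, ((cR i j t (g t) : ℝ) : ℂ)) •
        tensorFamily (fun t => Mf t (g t)) := by
    calc (∑ i : Fin 2, ∑ j : Fin 2, ((muR d i j : ℝ) : ℂ) •
        tensorFamily (fun t => if b t then ptranspose (PmatF d i) else PmatF d j))
        = ∑ i : Fin 2, ∑ j : Fin 2, ∑ g : ι → Fin 2,
            (((muR d i j : ℝ) : ℂ) * ∏ t, ((cR i j t (g t) : ℝ) : ℂ)) •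
              tensorFamily (fun t => Mf t (g t)) := by
          refine Finset.sum_congr rfl fun i _ => Finset.sum_congr rfl fun j _ => ?_
          rw [hsite i j, tensorFamily_sum_smul, Finset.smul_sum]
          exact Finset.sum_congr rfl fun g _ => smul_smul _ _ _
      _ = ∑ i : Fin 2, ∑ g : ι → Fin 2, ∑ j : Fin 2,
            (((muR d i j : ℝ) : ℂ) * ∏ t, ((cR i j t (g t) : ℝ) : ℂ)) •
              tensorFamily (fun t => Mf t (g t)) :=
          Finset.sum_congr rfl fun i _ => Finset.sum_comm
      _ = ∑ g : ι → Fin 2, ∑ i : Fin 2, ∑ j : Fin 2,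
            (((muR d i j : ℝ) : ℂ) * ∏ t, ((cR i j t (g t) : ℝ) : ℂ)) •
              tensorFamily (fun t => Mf t (g t)) := Finset.sum_comm
      _ = _ := by
          refine Finset.sum_congr rfl fun g _ => ?_
          simp only [Finset.sum_smul]
  rw [hrw]
  refine posSemidef_sum _ _ fun g _ => ?_
  -- the tensor factor is PSD
  have hT : (tensorFamily (fun t => Mf t (g t))).PosSemidef := by
    refine tensorFamily_posSemidef fun t => ?_
    by_cases hb : b t = true
    · simp only [hMf, hb, if_true]
      exact QmatF_posSemidef hd _
    · simp only [hMf, hb, if_false, Bool.false_eq_true]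
      exact PmatF_posSemidef _
  -- the coefficient is a nonnegative real
  set lamR : ℝ := ∑ i : Fin 2, ∑ j : Fin 2, muR d i j * ∏ t, cR i j t (g t) with hlamR
  have hcast : (∑ i : Fin 2, ∑ j : Fin 2,
      ((muR d i j : ℝ) : ℂ) * ∏ t, ((cR i j t (g t) : ℝ) : ℂ)) = ((lamR : ℝ) : ℂ) := by
    rw [hlamR]
    push_cast
    rfl
  have hFnonneg : ∀ j : Fin 2,
      0 ≤ (∏ t, cR 0 j t (g t)) ∧
        ((∏ t, cR 1 j t (g t)) = (∏ t, cR 0 j t (g t)) ∨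
          |∏ t, cR 1 j t (g t)| ≤ aR * ∏ t, cR 0 j t (g t)) := by
    intro j
    refine prod_pair aR ha0 ha1 Finset.univ _ _ fun t _ => ?_
    by_cases hb : b t = true
    · simp only [hcR, hb, if_true]
      by_cases hg : g t = 0
      · left
        constructor
        · norm_num [hg, cCR]
        · norm_num [hg, cCR]
      · right
        have hx : cCR d 0 (g t) = ((d : ℝ) + 1) / 2 := by
          rw [cCR, if_neg hg, gam]
          simp
        have hy : cCR d 1 (g t) = (1 - (d : ℝ)) / 2 := by
          rw [cCR, if_neg hg, gam]
          norm_num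
        constructor
        · rw [hx, hy, abs_of_nonpos (by linarith), haR]
          field_simp
          ring
        · rw [hx]
          linarith
    · simp only [hcR, hb, if_false, Bool.false_eq_true]
      left
      refine ⟨?_, by trivial⟩
      split <;> norm_num
  have hlam_nonneg : 0 ≤ lamR := by
    rw [hlamR, Fin.sum_univ_two, Fin.sum_univ_two, Fin.sum_univ_two]
    have h0 := hFnonneg 0
    have h1 := hFnonneg 1
    have e00 : muR d 0 0 = aR := rfl
    have e01 : muR d 0 1 = 1 := rfl
    have e10 : muR d 1 0 = 1 := rfl
    have e11 : muR d 1 1 = -1 := rfl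
    rw [e00, e01, e10, e11]
    obtain ⟨hx0, hd0⟩ := h0
    obtain ⟨hx1, hd1⟩ := h1
    have hA : 0 ≤ aR * (∏ t, cR 0 0 t (g t)) + (∏ t, cR 1 0 t (g t)) := by
      rcases hd0 with heq | hle
      · rw [heq]
        nlinarith
      · nlinarith [neg_abs_le (∏ t, cR 1 0 t (g t))]
    have hB : 0 ≤ (∏ t, cR 0 1 t (g t)) - (∏ t, cR 1 1 t (g t)) := by
      rcases hd1 with heq | hle
      · rw [heq]
        linarith
      · nlinarith [le_abs_self (∏ t, cR 1 1 t (g t))]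
    nlinarith
  rw [hcast]
  exact posSemidef_real_smul hT hlam_nonneg

end AuxProof



lemma ptransposeAll_smul {ι A B : Type} (c : ℂ) (X : Matrix (ι → A × B) (ι → A × B) ℂ) :
    ptransposeAll (c • X) = c • ptransposeAll X := rfl

lemma ptransposeAll_add {ι A B : Type} (X Y : Matrix (ι → A × B) (ι → A × B) ℂ) :
    ptransposeAll (X + Y) = ptransposeAll X + ptransposeAll Y := rfl

lemma ptransposeAll_sub {ι A B : Type} (X Y : Matrix (ι → A × B) (ι → A × B) ℂ) :
    ptransposeAll (X - Y) = ptransposeAll X - ptransposeAll Y := rfl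

lemma ptransposeAll_tensorFamily {ι A B : Type} [Fintype ι]
    (M : ι → Matrix (A × B) (A × B) ℂ) :
    ptransposeAll (tensorFamily M) = tensorFamily (fun t => ptranspose (M t)) := rfl

theorem stmt13 (d n : ℕ) (hd : 2 ≤ d) :
    (H13 d n).PosSemidef ∧ (ptransposeAll (H13 d n)).PosSemidef := by
  set crR : ℝ := (2 ^ (2 * n) * ((d : ℝ) + 1)) /
      ((d : ℝ) ^ (2 * n) * (Nat.factorial n : ℝ) ^ 2) with hcrR
  have hcr_nonneg : 0 ≤ crR := by positivity
  have hcast : ((2 : ℂ) ^ (2 * n) * ((d : ℂ) + 1)) /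
      ((d : ℂ) ^ (2 * n) * (Nat.factorial n : ℂ) ^ 2) = ((crR : ℝ) : ℂ) := by
    rw [hcrR]
    push_cast
    ring
  have hmu00 : ((muR d 0 0 : ℝ) : ℂ) = ((d : ℂ) - 1) / ((d : ℂ) + 1) := by
    rw [show muR d 0 0 = ((d : ℝ) - 1) / ((d : ℝ) + 1) from rfl]
    push_cast
    ring
  have hmu01 : ((muR d 0 1 : ℝ) : ℂ) = 1 := by norm_num [muR]
  have hmu10 : ((muR d 1 0 : ℝ) : ℂ) = 1 := by norm_num [muR]
  have hmu11 : ((muR d 1 1 : ℝ) : ℂ) = -1 := by norm_num [muR]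
  set b1 : (Fin n ⊕ Fin n) → Bool := Sum.elim (fun _ => false) (fun _ => true) with hb1
  set b2 : (Fin n ⊕ Fin n) → Bool := Sum.elim (fun _ => true) (fun _ => false) with hb2
  constructor
  · -- positivity of H13 itself
    have h00 : (fun t : Fin n ⊕ Fin n =>
        if b1 t then ptranspose (PmatF d 0) else PmatF d 0)
        = (fun t : Fin n ⊕ Fin n => match t with
            | Sum.inl _ => Psym d
            | Sum.inr _ => ptranspose (Psym d)) := by
      funext t; cases t <;> rfl
    have h10 : (fun t : Fin n ⊕ Fin n =>
        if b1 t then ptranspose (PmatF d 1) else PmatF d 0)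
        = (fun t : Fin n ⊕ Fin n => match t with
            | Sum.inl _ => Psym d
            | Sum.inr _ => ptranspose (Pasym d)) := by
      funext t; cases t <;> rfl
    have h01 : (fun t : Fin n ⊕ Fin n =>
        if b1 t then ptranspose (PmatF d 0) else PmatF d 1)
        = (fun t : Fin n ⊕ Fin n => match t with
            | Sum.inl _ => Pasym d
            | Sum.inr _ => ptranspose (Psym d)) := by
      funext t; cases t <;> rfl
    have h11 : (fun t : Fin n ⊕ Fin n =>
        if b1 t then ptranspose (PmatF d 1) else PmatF d 1)
        = (fun t : Fin n ⊕ Fin n => match t with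
            | Sum.inl _ => Pasym d
            | Sum.inr _ => ptranspose (Pasym d)) := by
      funext t; cases t <;> rfl
    have hS1 : H13 d n = ((crR : ℝ) : ℂ) •
        (∑ i : Fin 2, ∑ j : Fin 2, ((muR d i j : ℝ) : ℂ) •
          tensorFamily (fun t => if b1 t then ptranspose (PmatF d i) else PmatF d j)) := by
      rw [H13, hcast]
      congr 1
      rw [Fin.sum_univ_two, Fin.sum_univ_two, Fin.sum_univ_two]
      rw [h00, h10, h01, h11, hmu00, hmu01, hmu10, hmu11, one_smul, one_smul,
        neg_one_smul]
      abel
    rw [hS1]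
    exact posSemidef_real_smul (main_psd d hd b1) hcr_nonneg
  · -- positivity of the partial transpose
    have g00 : (fun t : Fin n ⊕ Fin n =>
        ptranspose ((fun t : Fin n ⊕ Fin n => match t with
            | Sum.inl _ => Psym d
            | Sum.inr _ => ptranspose (Psym d)) t))
        = (fun t : Fin n ⊕ Fin n =>
            if b2 t then ptranspose (PmatF d 0) else PmatF d 0) := by
      funext t; cases t <;> rfl
    have g10 : (fun t : Fin n ⊕ Fin n =>
        ptranspose ((fun t : Fin n ⊕ Fin n => match t with
            | Sum.inl _ => Psym d
            | Sum.inr _ => ptranspose (Pasym d)) t))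
        = (fun t : Fin n ⊕ Fin n =>
            if b2 t then ptranspose (PmatF d 0) else PmatF d 1) := by
      funext t; cases t <;> rfl
    have g01 : (fun t : Fin n ⊕ Fin n =>
        ptranspose ((fun t : Fin n ⊕ Fin n => match t with
            | Sum.inl _ => Pasym d
            | Sum.inr _ => ptranspose (Psym d)) t))
        = (fun t : Fin n ⊕ Fin n =>
            if b2 t then ptranspose (PmatF d 1) else PmatF d 0) := by
      funext t; cases t <;> rfl
    have g11 : (fun t : Fin n ⊕ Fin n =>
        ptranspose ((fun t : Fin n ⊕ Fin n => match t with
            | Sum.inl _ => Pasym d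
            | Sum.inr _ => ptranspose (Pasym d)) t))
        = (fun t : Fin n ⊕ Fin n =>
            if b2 t then ptranspose (PmatF d 1) else PmatF d 1) := by
      funext t; cases t <;> rfl
    have hS2 : ptransposeAll (H13 d n) = ((crR : ℝ) : ℂ) •
        (∑ i : Fin 2, ∑ j : Fin 2, ((muR d i j : ℝ) : ℂ) •
          tensorFamily (fun t => if b2 t then ptranspose (PmatF d i) else PmatF d j)) := by
      rw [H13]
      simp only [ptransposeAll_smul, ptransposeAll_sub, ptransposeAll_add,
        ptransposeAll_tensorFamily]
      rw [hcast]
      congr 1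
      rw [Fin.sum_univ_two, Fin.sum_univ_two, Fin.sum_univ_two]
      rw [g00, g10, g01, g11, hmu00, hmu01, hmu10, hmu11, one_smul, one_smul,
        neg_one_smul]
      abel
    rw [hS2]
    exact posSemidef_real_smul (main_psd d hd b2) hcr_nonneg

end TensorDecomp
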